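/- Let a, b, c be positive integers and g = gcd(a+c, b+c). In the partizan subtraction game with S_L = {a, b} and S_R = {c}, for every n with n mod g ≥ c, Right moving first wins on a heap of size n (i.e., RightFirstWins(n)). -/
import Mathlib


mutual
def LeftFirstWins (SL SR : Finset ℕ) : ℕ → Prop
  | n => ∃ s ∈ SL, ∃ (_ : 0 < s) (_ : s ≤ n), ¬ RightFirstWins SL SR (n - s)
  termination_by n => n
  decreasing_by omega
def RightFirstWins (SL SR : Finset ℕ) : ℕ → Prop
  | n => ∃ s ∈ SR, ∃ (_ : 0 < s) (_ : s ≤ n), ¬ LeftFirstWins SL SR (n - s)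
  termination_by n => n
  decreasing_by omega
end

inductive Outcome | P | L | R | N
deriving DecidableEq

open Classical in
noncomputable def outcome (SL SR : Finset ℕ) (n : ℕ) : Outcome :=
  if LeftFirstWins SL SR n then
    if RightFirstWins SL SR n then .N else .L
  else
    if RightFirstWins SL SR n then .R else .P

theorem stmt_4 (a b c : ℕ) (ha : 0 < a) (hb : 0 < b) (hc : 0 < c) (n : ℕ)
    (h : c ≤ n % Nat.gcd (a + c) (b + c)) :
    RightFirstWins {a, b} {c} n := by
  induction n using Nat.strong_induction_on with
  | _ n ih =>
    set g := Nat.gcd (a + c) (b + c) with hg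
    have hgpos : 0 < g := Nat.gcd_pos_of_pos_left _ (by omega)
    have hcn : c ≤ n := le_trans h (Nat.mod_le n g)
    rw [RightFirstWins]
    refine ⟨c, by simp, hc, hcn, ?_⟩
    rw [LeftFirstWins]
    rintro ⟨s, hs, hspos, hsle, hR⟩
    apply hR
    have hdvd : g ∣ s + c := by
      simp only [Finset.mem_insert, Finset.mem_singleton] at hs
      rcases hs with rfl | rfl
      · exact Nat.gcd_dvd_left _ _
      · exact Nat.gcd_dvd_right _ _
    obtain ⟨m, hm⟩ := hdvd
    have hmod : (n - c - s) % g = n % g := by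
      have he : n - c - s = n - g * m := by omega
      rw [he, Nat.sub_mul_mod]
      omega
    exact ih (n - c - s) (by omega) (by rw [hmod]; exact h)
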